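/- arXiv:1802.07613 — 3 statements merged into one kernel-verified Lean document; each statement's English description precedes it below -/
import Mathlib

section
/- With u := β̂ − β*, one has |u_{Sᶜ}|₁ ≤ |u_S|₁ + (2/(λ n'))⟨ξ, 𝕫'u⟩. -/
open Finset

open scoped Classical in
/-- **Lemma (consequence of first-order conditions).** With u := β̂ − β*, one has
|u_{Sᶜ}|₁ ≤ |u_S|₁ + (2/(λ n'))⟨ξ, 𝕫'u⟩, where S = {j : β*ⱼ ≠ 0}, ξ := Y − 𝕫'β* and β̂
is a minimizer of the lasso criterion ‖Y − 𝕫'β‖²_{n'} + λ|β|₁. -/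
theorem lasso_first_order_consequence
    {n' p' : ℕ} (hn' : 1 ≤ n') (hp' : 1 ≤ p')
    (Zd : Matrix (Fin n') (Fin p') ℝ) (Y : Fin n' → ℝ) (lam : ℝ) (hlam : 0 < lam)
    (βstar βhat : Fin p' → ℝ)
    (hmin : ∀ β : Fin p' → ℝ,
      (∑ i, (Y i - ∑ j, Zd i j * βhat j) ^ 2) / (n' : ℝ) + lam * ∑ j, |βhat j|
        ≤ (∑ i, (Y i - ∑ j, Zd i j * β j) ^ 2) / (n' : ℝ) + lam * ∑ j, |β j|) :
    (∑ j, if βstar j = 0 then |βhat j - βstar j| else 0)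
      ≤ (∑ j, if βstar j ≠ 0 then |βhat j - βstar j| else 0)
        + (2 / (lam * (n' : ℝ))) *
            ∑ i, (Y i - ∑ j, Zd i j * βstar j) * (∑ j, Zd i j * (βhat j - βstar j)) := by
  set ξ : Fin n' → ℝ := fun i => Y i - ∑ j, Zd i j * βstar j with hξ
  set v : Fin n' → ℝ := fun i => ∑ j, Zd i j * (βhat j - βstar j) with hv
  have hn : (0 : ℝ) < (n' : ℝ) := by exact_mod_cast hn'
  have hresid : ∀ i, Y i - ∑ j, Zd i j * βhat j = ξ i - v i := by
    intro i
    simp only [hξ, hv, mul_sub, Finset.sum_sub_distrib]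
    ring
  have hA : (∑ i, (Y i - ∑ j, Zd i j * βhat j) ^ 2)
      = (∑ i, (ξ i) ^ 2) - 2 * (∑ i, ξ i * v i) + ∑ i, (v i) ^ 2 := by
    simp only [hresid]
    rw [Finset.sum_congr rfl (fun i _ => by ring :
      ∀ i ∈ Finset.univ, (ξ i - v i) ^ 2 = (ξ i) ^ 2 - 2 * (ξ i * v i) + (v i) ^ 2)]
    rw [Finset.sum_add_distrib, Finset.sum_sub_distrib, Finset.mul_sum]
  have hkey : lam * ((∑ j, |βhat j|) - ∑ j, |βstar j|) ≤ 2 * (∑ i, ξ i * v i) / (n' : ℝ) := by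
    have h := hmin βstar
    have hC : (∑ i, (Y i - ∑ j, Zd i j * βstar j) ^ 2) = ∑ i, (ξ i) ^ 2 := rfl
    rw [hA, hC] at h
    have hv2 : (0 : ℝ) ≤ ∑ i, (v i) ^ 2 := Finset.sum_nonneg fun i _ => sq_nonneg _
    have h3 := mul_le_mul_of_nonneg_right h hn.le
    rw [add_mul, add_mul, div_mul_cancel₀ _ hn.ne', div_mul_cancel₀ _ hn.ne'] at h3
    have : lam * ((∑ j, |βhat j|) - ∑ j, |βstar j|)
        ≤ (2 * (∑ i, ξ i * v i) - ∑ i, (v i) ^ 2) / (n' : ℝ) := by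
      rw [le_div_iff₀ hn]
      nlinarith
    refine this.trans ?_
    gcongr
    linarith
  have hpt : (∑ j, if βstar j = 0 then |βhat j - βstar j| else 0)
      - (∑ j, if βstar j ≠ 0 then |βhat j - βstar j| else 0)
      ≤ (∑ j, |βhat j|) - ∑ j, |βstar j| := by
    rw [← Finset.sum_sub_distrib, ← Finset.sum_sub_distrib]
    apply Finset.sum_le_sum
    intro j _
    by_cases hj : βstar j = 0
    · simp [hj]
    · simp only [hj, if_neg, if_pos, ne_eq, not_false_eq_true, if_true]
      have := abs_sub_abs_le_abs_sub (βstar j) (βhat j)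
      have := abs_sub_comm (βstar j) (βhat j)
      linarith
  have hlamn : (0 : ℝ) < lam * (n' : ℝ) := mul_pos hlam hn
  rw [← sub_le_iff_le_add']
  rw [div_mul_eq_mul_div, le_div_iff₀ hlamn]
  have h2 : lam * ((∑ j, if βstar j = 0 then |βhat j - βstar j| else 0)
      - (∑ j, if βstar j ≠ 0 then |βhat j - βstar j| else 0))
      ≤ 2 * (∑ i, ξ i * v i) / (n' : ℝ) :=
    le_trans (by nlinarith) hkey
  have hfold : ∑ i, (Y i - ∑ j, Zd i j * βstar j) * (∑ j, Zd i j * (βhat j - βstar j))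
      = ∑ i, ξ i * v i := rfl
  rw [hfold]
  rw [le_div_iff₀ hn] at h2
  nlinarith
end

section
/- Assume max_{j=1,…,p'} |(1/n') Σ_{i=1}^{n'} 𝕫'_{i,j} ξᵢ| ≤ t for some t > 0 and λ = γt with γ ≥ 4. Then, with u := β̂ − β*, one has |u_{Sᶜ}|₁ ≤ 3|u_S|₁; moreover, if |S| ≤ s and 𝕫' satisfies the RE(s,3) condition with constant κ(s,3) > 0, then |u|₁ ≤ 4√s ‖𝕫'u‖_{n'} / κ(s,3). -/
open Finset

/-- The Restricted Eigenvalue condition RE(s, c₀) with constant κ. -/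
def REcondition {n' p' : ℕ} (Zd : Matrix (Fin n') (Fin p') ℝ) (s : ℕ) (c₀ κ : ℝ) : Prop :=
  0 < κ ∧ ∀ J₀ : Finset (Fin p'), J₀.card ≤ s → ∀ δ : Fin p' → ℝ, δ ≠ 0 →
    (∑ j ∈ J₀ᶜ, |δ j|) ≤ c₀ * ∑ j ∈ J₀, |δ j| →
    κ * Real.sqrt n' * Real.sqrt (∑ j, δ j ^ 2) ≤ Real.sqrt (∑ i, (∑ j, Zd i j * δ j) ^ 2)

open scoped Classical in
/-- **Lemma (cone condition and l₁ bound).** If max_j |(1/n')Σᵢ 𝕫'_{i,j}ξᵢ| ≤ t and λ = γt with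
γ ≥ 4, then u := β̂ − β* satisfies |u_{Sᶜ}|₁ ≤ 3|u_S|₁; moreover, if |S| ≤ s and 𝕫' satisfies
RE(s,3) with constant κ(s,3) > 0, then |u|₁ ≤ 4√s‖𝕫'u‖_{n'}/κ(s,3). -/
theorem lasso_cone_and_l1_bound
    {n' p' : ℕ} (hn' : 1 ≤ n') (hp' : 1 ≤ p')
    (Zd : Matrix (Fin n') (Fin p') ℝ) (Y : Fin n' → ℝ)
    (βstar βhat : Fin p' → ℝ)
    (t γ lam : ℝ) (ht : 0 < t) (hγ : 4 ≤ γ) (hlam : lam = γ * t)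
    (hmin : ∀ β : Fin p' → ℝ,
      (∑ i, (Y i - ∑ j, Zd i j * βhat j) ^ 2) / (n' : ℝ) + lam * ∑ j, |βhat j|
        ≤ (∑ i, (Y i - ∑ j, Zd i j * β j) ^ 2) / (n' : ℝ) + lam * ∑ j, |β j|)
    (hmax : ∀ j : Fin p',
      |(∑ i, Zd i j * (Y i - ∑ j', Zd i j' * βstar j')) / (n' : ℝ)| ≤ t) :
    (∑ j, if βstar j = 0 then |βhat j - βstar j| else 0)
      ≤ 3 * (∑ j, if βstar j ≠ 0 then |βhat j - βstar j| else 0)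
    ∧ ∀ s : ℕ, ∀ κ : ℝ,
        (Finset.univ.filter (fun j => βstar j ≠ 0)).card ≤ s →
        REcondition Zd s 3 κ →
        (∑ j, |βhat j - βstar j|)
          ≤ 4 * Real.sqrt s *
              (Real.sqrt (∑ i, (∑ j, Zd i j * (βhat j - βstar j)) ^ 2) / Real.sqrt n') / κ := by
  have hnpos : (0:ℝ) < (n' : ℝ) := by exact_mod_cast hn'
  set S : Finset (Fin p') := Finset.univ.filter (fun j => βstar j ≠ 0) with hS
  set a : ℝ := ∑ j ∈ S, |βhat j - βstar j| with ha_def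
  set b : ℝ := ∑ j ∈ Sᶜ, |βhat j - βstar j| with hb_def
  have ha : 0 ≤ a := Finset.sum_nonneg fun j _ => abs_nonneg _
  have hb : 0 ≤ b := Finset.sum_nonneg fun j _ => abs_nonneg _
  have hlam_nonneg : 0 ≤ lam := by rw [hlam]; nlinarith
  -- decomposition of the residual
  have hsum_u : ∀ i, Y i - ∑ j, Zd i j * βhat j
      = (Y i - ∑ j', Zd i j' * βstar j') - ∑ j, Zd i j * (βhat j - βstar j) := by
    intro i
    have h : ∑ j, Zd i j * (βhat j - βstar j)
        = (∑ j, Zd i j * βhat j) - ∑ j', Zd i j' * βstar j' := by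
      rw [← Finset.sum_sub_distrib]
      exact Finset.sum_congr rfl fun j _ => by ring
    rw [h]; ring
  -- basic inequality
  have hbasic : (∑ i, (∑ j, Zd i j * (βhat j - βstar j)) ^ 2) / (n' : ℝ)
        + lam * ∑ j, |βhat j|
      ≤ 2 * ((∑ i, (Y i - ∑ j', Zd i j' * βstar j')
            * (∑ j, Zd i j * (βhat j - βstar j))) / (n' : ℝ))
        + lam * ∑ j, |βstar j| := by
    have h := hmin βstar
    have hid : (∑ i, (Y i - ∑ j, Zd i j * βhat j) ^ 2)
          + 2 * (∑ i, (Y i - ∑ j', Zd i j' * βstar j')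
              * (∑ j, Zd i j * (βhat j - βstar j)))
        = (∑ i, (Y i - ∑ j, Zd i j * βstar j) ^ 2)
          + ∑ i, (∑ j, Zd i j * (βhat j - βstar j)) ^ 2 := by
      rw [Finset.mul_sum, ← Finset.sum_add_distrib, ← Finset.sum_add_distrib]
      exact Finset.sum_congr rfl fun i _ => by rw [hsum_u i]; ring
    have hexp : ∑ i, (Y i - ∑ j, Zd i j * βhat j) ^ 2
        = (∑ i, (Y i - ∑ j, Zd i j * βstar j) ^ 2)
          - 2 * (∑ i, (Y i - ∑ j', Zd i j' * βstar j')
              * (∑ j, Zd i j * (βhat j - βstar j)))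
          + ∑ i, (∑ j, Zd i j * (βhat j - βstar j)) ^ 2 := by linarith
    rw [hexp, add_div, sub_div, mul_div_assoc] at h
    linarith
  -- inner product bound
  have hswap : (∑ i, (Y i - ∑ j', Zd i j' * βstar j')
        * (∑ j, Zd i j * (βhat j - βstar j)))
      = ∑ j, (∑ i, Zd i j * (Y i - ∑ j', Zd i j' * βstar j')) * (βhat j - βstar j) := by
    simp_rw [Finset.mul_sum]
    rw [Finset.sum_comm]
    simp_rw [Finset.sum_mul]
    exact Finset.sum_congr rfl fun j _ => Finset.sum_congr rfl fun i _ => by ring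
  have hIP : (∑ i, (Y i - ∑ j', Zd i j' * βstar j')
        * (∑ j, Zd i j * (βhat j - βstar j))) / (n' : ℝ)
      ≤ t * ∑ j, |βhat j - βstar j| := by
    rw [hswap, Finset.sum_div, Finset.mul_sum]
    apply Finset.sum_le_sum
    intro j _
    have h1 := hmax j
    calc (∑ i, Zd i j * (Y i - ∑ j', Zd i j' * βstar j')) * (βhat j - βstar j) / (n' : ℝ)
        = ((∑ i, Zd i j * (Y i - ∑ j', Zd i j' * βstar j')) / (n' : ℝ)) * (βhat j - βstar j) := by
          ring
      _ ≤ |((∑ i, Zd i j * (Y i - ∑ j', Zd i j' * βstar j')) / (n' : ℝ)) * (βhat j - βstar j)| :=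
          le_abs_self _
      _ = |(∑ i, Zd i j * (Y i - ∑ j', Zd i j' * βstar j')) / (n' : ℝ)| * |βhat j - βstar j| :=
          abs_mul _ _
      _ ≤ t * |βhat j - βstar j| := mul_le_mul_of_nonneg_right h1 (abs_nonneg _)
  have htot : ∑ j, |βhat j - βstar j| = a + b := by
    rw [ha_def, hb_def, Finset.sum_add_sum_compl]
  -- l1 norm comparison
  have hl1 : (∑ j, |βstar j|) - ∑ j, |βhat j| ≤ a - b := by
    have hSc : ∀ j ∈ Sᶜ, |βstar j| - |βhat j| = -|βhat j - βstar j| := by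
      intro j hj
      have hj0 : βstar j = 0 := by
        simp only [hS, Finset.mem_compl, Finset.mem_filter, Finset.mem_univ, true_and,
          not_not] at hj
        exact hj
      simp [hj0]
    have hS1 : ∀ j ∈ S, |βstar j| - |βhat j| ≤ |βhat j - βstar j| := by
      intro j _
      have h := abs_sub_abs_le_abs_sub (βstar j) (βhat j)
      rwa [abs_sub_comm] at h
    calc (∑ j, |βstar j|) - ∑ j, |βhat j|
        = ∑ j, (|βstar j| - |βhat j|) := by rw [Finset.sum_sub_distrib]
      _ = (∑ j ∈ S, (|βstar j| - |βhat j|)) + ∑ j ∈ Sᶜ, (|βstar j| - |βhat j|) :=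
          (Finset.sum_add_sum_compl S _).symm
      _ ≤ a + ∑ j ∈ Sᶜ, (-|βhat j - βstar j|) :=
          add_le_add (Finset.sum_le_sum hS1) (le_of_eq (Finset.sum_congr rfl hSc))
      _ = a - b := by rw [Finset.sum_neg_distrib, hb_def]; ring
  -- cone condition
  have hQv : 0 ≤ (∑ i, (∑ j, Zd i j * (βhat j - βstar j)) ^ 2) / (n' : ℝ) := by positivity
  have h2 : lam * ((∑ j, |βstar j|) - ∑ j, |βhat j|) ≤ lam * (a - b) :=
    mul_le_mul_of_nonneg_left hl1 hlam_nonneg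
  have h2' : lam * (∑ j, |βstar j|) - lam * (∑ j, |βhat j|) ≤ lam * a - lam * b := by
    nlinarith [h2]
  have hIP' : (∑ i, (Y i - ∑ j', Zd i j' * βstar j')
        * (∑ j, Zd i j * (βhat j - βstar j))) / (n' : ℝ) ≤ t * a + t * b := by
    calc _ ≤ t * ∑ j, |βhat j - βstar j| := hIP
      _ = t * a + t * b := by rw [htot]; ring
  have hkey : 0 ≤ 2 * (t * a + t * b) + (lam * a - lam * b) := by linarith
  have hkey2 : 0 ≤ 2 * a + 2 * b + γ * a - γ * b := by
    have heq : 2 * (t * a + t * b) + (lam * a - lam * b)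
        = t * (2 * a + 2 * b + γ * a - γ * b) := by rw [hlam]; ring
    rw [heq] at hkey
    by_contra hneg
    push_neg at hneg
    nlinarith
  have hcone : b ≤ 3 * a := by
    nlinarith [mul_nonneg (by linarith : (0:ℝ) ≤ γ - 4) ha]
  -- part 1 in the `if` form
  have e_a : (∑ j, if βstar j ≠ 0 then |βhat j - βstar j| else 0) = a := by
    rw [ha_def, Finset.sum_filter]
  have e_b : (∑ j, if βstar j = 0 then |βhat j - βstar j| else 0) = b := by
    have hScompl : Sᶜ = Finset.univ.filter (fun j => βstar j = 0) := by
      ext j; simp [hS, not_not]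
    rw [hb_def, hScompl, Finset.sum_filter]
  constructor
  · rw [e_a, e_b]; exact hcone
  · intro s κ hcard hRE
    obtain ⟨hκ, hre⟩ := hRE
    by_cases hz : (fun j => βhat j - βstar j) = 0
    · have hz' : ∀ j, βhat j - βstar j = 0 := fun j => congrFun hz j
      have : (∑ j, |βhat j - βstar j|) = 0 :=
        Finset.sum_eq_zero fun j _ => by rw [hz' j, abs_zero]
      rw [this]
      exact div_nonneg (mul_nonneg (mul_nonneg (by norm_num) (Real.sqrt_nonneg _))
        (div_nonneg (Real.sqrt_nonneg _) (Real.sqrt_nonneg _))) hκ.le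
    · have hcone' : (∑ j ∈ Sᶜ, |(fun j => βhat j - βstar j) j|)
          ≤ 3 * ∑ j ∈ S, |(fun j => βhat j - βstar j) j| := by
        simpa [← ha_def, ← hb_def] using hcone
      have hREapp := hre S hcard (fun j => βhat j - βstar j) hz hcone'
      -- Cauchy–Schwarz
      have hC : a ≤ Real.sqrt s * Real.sqrt (∑ j, (βhat j - βstar j) ^ 2) := by
        have h1 : a ^ 2 ≤ (S.card : ℝ) * ∑ j ∈ S, |βhat j - βstar j| ^ 2 :=
          sq_sum_le_card_mul_sum_sq
        have h2 : (∑ j ∈ S, |βhat j - βstar j| ^ 2) ≤ ∑ j, (βhat j - βstar j) ^ 2 := by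
          simp_rw [sq_abs]
          exact Finset.sum_le_sum_of_subset_of_nonneg (Finset.subset_univ S)
            (fun j _ _ => sq_nonneg _)
        have h3 : (S.card : ℝ) ≤ (s : ℝ) := by exact_mod_cast hcard
        have hsq : 0 ≤ ∑ j ∈ S, |βhat j - βstar j| ^ 2 :=
          Finset.sum_nonneg fun j _ => sq_nonneg _
        calc a = Real.sqrt (a ^ 2) := (Real.sqrt_sq ha).symm
          _ ≤ Real.sqrt ((s : ℝ) * ∑ j, (βhat j - βstar j) ^ 2) := by
              apply Real.sqrt_le_sqrt
              have h4 : (S.card : ℝ) * (∑ j ∈ S, |βhat j - βstar j| ^ 2)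
                  ≤ (S.card : ℝ) * ∑ j, (βhat j - βstar j) ^ 2 :=
                mul_le_mul_of_nonneg_left h2 (Nat.cast_nonneg _)
              have h5 : (S.card : ℝ) * (∑ j, (βhat j - βstar j) ^ 2)
                  ≤ (s : ℝ) * ∑ j, (βhat j - βstar j) ^ 2 :=
                mul_le_mul_of_nonneg_right h3
                  (Finset.sum_nonneg fun j _ => sq_nonneg _)
              linarith
          _ = Real.sqrt s * Real.sqrt (∑ j, (βhat j - βstar j) ^ 2) :=
              Real.sqrt_mul (by positivity) _
      have hsn : (0:ℝ) < Real.sqrt n' := Real.sqrt_pos.2 hnpos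
      have hdiv : Real.sqrt (∑ j, (βhat j - βstar j) ^ 2)
          ≤ Real.sqrt (∑ i, (∑ j, Zd i j * (βhat j - βstar j)) ^ 2) / (κ * Real.sqrt n') := by
        rw [le_div_iff₀ (by positivity), mul_comm]
        exact hREapp
      rw [htot]
      have hab : a + b ≤ 4 * a := by linarith
      calc a + b ≤ 4 * a := hab
        _ ≤ 4 * (Real.sqrt s * Real.sqrt (∑ j, (βhat j - βstar j) ^ 2)) := by linarith
        _ = 4 * Real.sqrt s * Real.sqrt (∑ j, (βhat j - βstar j) ^ 2) := by ring
        _ ≤ 4 * Real.sqrt s *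
            (Real.sqrt (∑ i, (∑ j, Zd i j * (βhat j - βstar j)) ^ 2) / (κ * Real.sqrt n')) := by
              apply mul_le_mul_of_nonneg_left hdiv (by positivity)
        _ = 4 * Real.sqrt s *
            (Real.sqrt (∑ i, (∑ j, Zd i j * (βhat j - βstar j)) ^ 2) / Real.sqrt n') / κ := by
              rw [mul_comm κ _, ← div_div, mul_div_assoc]
end

section
/- Assume max_{j=1,…,p'} |(1/n') Σ_{i=1}^{n'} 𝕫'_{i,j} ξᵢ| ≤ t for some t > 0, that 𝕫' satisfies the RE(s,3) condition with constant κ(s,3) > 0 and |S| ≤ s, and that λ = γt with γ ≥ 4. Then ‖𝕫'(β̂ − β*)‖_{n'} ≤ 4(γ+1)t√s / κ(s,3), and for every 1 ≤ q ≤ 2, |β̂ − β*|_q ≤ 4^{2/q}(γ+1)·t·s^{1/q} / κ(s,3)². -/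
/-!
Comparing the lasso objective at `β̂` and at `β*` gives, for `δ = β̂ - β*`, the basic inequality
`‖𝕫'δ‖²_{n'} ≤ 2 ⟨𝕫'ᵀξ / n', δ⟩ + λ (|β*|₁ - |β̂|₁)`. The noise bound controls the inner product
by `t |δ|₁`, and as `β*` vanishes off `S`, `|β*|₁ - |β̂|₁ ≤ |δ_S|₁ - |δ_{Sᶜ}|₁`. For `λ = γ t` with
`γ ≥ 4` this puts `δ` in the cone `|δ_{Sᶜ}|₁ ≤ 3 |δ_S|₁` and gives
`‖𝕫'δ‖²_{n'} ≤ (γ + 2) t |δ_S|₁ ≤ (γ + 2) t √s |δ|₂`. On the cone, RE gives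
`κ |δ|₂ ≤ ‖𝕫'δ‖_{n'}`, which closes this quadratic inequality for the prediction error and then
bounds `|δ|₂`; moreover `|δ|₁ ≤ 4 √s |δ|₂`. The `ℓ_q` bound interpolates between the two:
`|δ|_q^q ≤ |δ|₁^{2-q} |δ|₂^{2(q-1)}`.
-/

open Finset

section Norms

variable {ι : Type*} (s : Finset ι) (x : ι → ℝ)

theorem abs_sum_mul_le_of_abs_le (g : ι → ℝ) {t : ℝ} (hg : ∀ j ∈ s, |g j| ≤ t) :
    |∑ j ∈ s, x j * g j| ≤ t * ∑ j ∈ s, |x j| := by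
  rw [mul_sum]
  refine (abs_sum_le_sum_abs _ _).trans (sum_le_sum fun j hj => ?_)
  rw [abs_mul, mul_comm]
  exact mul_le_mul_of_nonneg_right (hg j hj) (abs_nonneg _)

theorem sum_abs_le_sqrt_mul_sqrt_sum_sq [Fintype ι] {r : ℝ} (hs : (#s : ℝ) ≤ r) :
    ∑ j ∈ s, |x j| ≤ √r * √(∑ j, x j ^ 2) := by
  rw [← Real.sqrt_mul ((#s).cast_nonneg.trans hs)]
  refine Real.le_sqrt_of_sq_le ((sq_sum_le_card_mul_sum_sq ..).trans ?_)
  simp only [sq_abs]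
  exact mul_le_mul hs (sum_le_sum_of_subset_of_nonneg (subset_univ s) fun j _ _ => sq_nonneg _)
    (sum_nonneg fun j _ => sq_nonneg _) ((#s).cast_nonneg.trans hs)

theorem sum_abs_le_mul_sqrt_mul_sqrt_sum_sq [Fintype ι] [DecidableEq ι] {r c₀ : ℝ} (hc₀ : 0 ≤ c₀)
    (hs : (#s : ℝ) ≤ r) (hcone : ∑ j ∈ sᶜ, |x j| ≤ c₀ * ∑ j ∈ s, |x j|) :
    ∑ j, |x j| ≤ (1 + c₀) * √r * √(∑ j, x j ^ 2) := by
  rw [← sum_add_sum_compl s, mul_assoc]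
  nlinarith [sum_abs_le_sqrt_mul_sqrt_sum_sq s x hs]

variable {q : ℝ}

/-- Weighted Hölder with weights `|x j|` and exponent `1 / (q - 1)`. -/
theorem sum_abs_rpow_le_mul_rpow (hq1 : 1 ≤ q) (hq2 : q ≤ 2) :
    ∑ j ∈ s, |x j| ^ q ≤ (∑ j ∈ s, |x j|) ^ (2 - q) * (∑ j ∈ s, x j ^ 2) ^ (q - 1) := by
  rcases hq1.eq_or_lt with rfl | hq1
  · norm_num
  have hp : 1 ≤ (q - 1)⁻¹ := one_le_inv₀ (by linarith) |>.mpr (by linarith)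
  have holder := Real.inner_le_weight_mul_Lp_of_nonneg s hp (fun j => |x j|)
    (fun j => |x j| ^ (q - 1)) (fun j => abs_nonneg _) (fun j => by positivity)
  have hpow (j : ι) : |x j| * |x j| ^ (q - 1) = |x j| ^ q := by
    rw [← Real.rpow_one_add' (abs_nonneg _) (by linarith), add_sub_cancel]
  have hsq (j : ι) : |x j| * (|x j| ^ (q - 1)) ^ (q - 1)⁻¹ = x j ^ 2 := by
    rw [Real.rpow_rpow_inv (abs_nonneg _) (by linarith), ← sq, sq_abs]
  simpa only [hpow, hsq, inv_inv, sub_sub_cancel_left, show 1 - (q - 1) = 2 - q by ring]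
    using holder

theorem rpow_sum_abs_rpow_le {K r C : ℝ} (hq1 : 1 ≤ q) (hq2 : q ≤ 2) (hK : 0 ≤ K) (hr : 0 ≤ r)
    (hC : 0 ≤ C) (h1 : ∑ j ∈ s, |x j| ≤ K * √r * √(∑ j ∈ s, x j ^ 2))
    (h2 : √(∑ j ∈ s, x j ^ 2) ≤ K * √r * C) :
    (∑ j ∈ s, |x j| ^ q) ^ (1 / q) ≤ K ^ (2 / q) * r ^ (1 / q) * C := by
  have hq : 0 < q := by linarith
  have hKr : 0 ≤ K ^ 2 * r := by positivity
  have hl1 : ∑ j ∈ s, |x j| ≤ K ^ 2 * r * C := by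
    have := mul_le_mul_of_nonneg_left h2 (by positivity : 0 ≤ K * √r)
    rw [show K * √r * (K * √r * C) = K ^ 2 * (√r * √r) * C by ring,
      Real.mul_self_sqrt hr] at this
    exact h1.trans this
  have hl2 : ∑ j ∈ s, x j ^ 2 ≤ K ^ 2 * r * C * C := by
    rw [← Real.sq_sqrt (sum_nonneg fun j _ => sq_nonneg (x j))]
    calc _ ≤ (K * √r * C) ^ 2 := by gcongr
      _ = K ^ 2 * r * C * C := by rw [mul_pow, mul_pow, Real.sq_sqrt hr]; ring
  have hsum : ∑ j ∈ s, |x j| ^ q ≤ K ^ 2 * r * C ^ q :=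
    calc ∑ j ∈ s, |x j| ^ q
        ≤ (∑ j ∈ s, |x j|) ^ (2 - q) * (∑ j ∈ s, x j ^ 2) ^ (q - 1) :=
          sum_abs_rpow_le_mul_rpow s x hq1 hq2
      _ ≤ (K ^ 2 * r * C) ^ (2 - q) * (K ^ 2 * r * C * C) ^ (q - 1) := by gcongr
      _ = K ^ 2 * r * C ^ q := by
          rw [Real.mul_rpow (x := K ^ 2 * r * C) (by positivity) hC, ← mul_assoc,
            ← Real.rpow_add' (by positivity) (by norm_num), sub_add_sub_cancel,
            show (2 : ℝ) - 1 = 1 by norm_num, Real.rpow_one, mul_assoc,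
            ← Real.rpow_one_add' hC (by linarith), add_sub_cancel]
  calc (∑ j ∈ s, |x j| ^ q) ^ (1 / q) ≤ (K ^ 2 * r * C ^ q) ^ (1 / q) := by gcongr
    _ = K ^ (2 / q) * r ^ (1 / q) * C := by
        rw [Real.mul_rpow hKr (by positivity), Real.mul_rpow (by positivity) hr,
          ← Real.rpow_natCast, ← Real.rpow_mul hK, ← Real.rpow_mul hC, mul_one_div_cancel hq.ne',
          Real.rpow_one, Nat.cast_ofNat, mul_one_div]

end Norms

section Lasso

variable {m ι : Type*} [Fintype m] [Fintype ι] (Z : Matrix m ι ℝ) (Y : m → ℝ) (β₀ β : ι → ℝ)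

theorem sum_abs_sub_sum_abs_le_of_eq_zero [DecidableEq ι] (S : Finset ι)
    (hS : ∀ j ∉ S, β₀ j = 0) :
    ∑ j, |β₀ j| - ∑ j, |β j| ≤ ∑ j ∈ S, |β j - β₀ j| - ∑ j ∈ Sᶜ, |β j - β₀ j| := by
  have hout : ∑ j ∈ Sᶜ, |β₀ j| = 0 :=
    sum_eq_zero fun j hj => by rw [hS j (mem_compl.mp hj), abs_zero]
  have hout' : ∑ j ∈ Sᶜ, |β j - β₀ j| = ∑ j ∈ Sᶜ, |β j| :=
    sum_congr rfl fun j hj => by rw [hS j (mem_compl.mp hj), sub_zero]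
  have hin : ∑ j ∈ S, |β₀ j| - ∑ j ∈ S, |β j| ≤ ∑ j ∈ S, |β j - β₀ j| := by
    rw [← sum_sub_distrib]
    exact sum_le_sum fun j _ => abs_sub_comm (β j) (β₀ j) ▸ abs_sub_abs_le_abs_sub _ _
  rw [← sum_add_sum_compl S, ← sum_add_sum_compl S (fun j => |β j|)]
  linarith

theorem lasso_basic_inequality {c lam : ℝ}
    (hmin : (∑ i, (Y i - ∑ j, Z i j * β j) ^ 2) / c + lam * ∑ j, |β j|
      ≤ (∑ i, (Y i - ∑ j, Z i j * β₀ j) ^ 2) / c + lam * ∑ j, |β₀ j|) :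
    (∑ i, (∑ j, Z i j * (β j - β₀ j)) ^ 2) / c
      ≤ 2 * ∑ j, (β j - β₀ j) * ((∑ i, Z i j * (Y i - ∑ j', Z i j' * β₀ j')) / c)
        + lam * (∑ j, |β₀ j| - ∑ j, |β j|) := by
  have hcross : ∑ i, (Y i - ∑ j, Z i j * β₀ j) * ∑ j, Z i j * (β j - β₀ j)
      = ∑ j, (β j - β₀ j) * ∑ i, Z i j * (Y i - ∑ j', Z i j' * β₀ j') := by
    simp_rw [mul_sum]
    rw [sum_comm]
    exact sum_congr rfl fun j _ => sum_congr rfl fun i _ => by ring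
  have hexpand : ∑ i, (Y i - ∑ j, Z i j * β j) ^ 2
      = ∑ i, (Y i - ∑ j, Z i j * β₀ j) ^ 2
        - 2 * ∑ i, (Y i - ∑ j, Z i j * β₀ j) * ∑ j, Z i j * (β j - β₀ j)
        + ∑ i, (∑ j, Z i j * (β j - β₀ j)) ^ 2 := by
    rw [mul_sum, ← sum_sub_distrib, ← sum_add_distrib]
    refine sum_congr rfl fun i _ => ?_
    simp only [mul_sub, sum_sub_distrib]
    ring
  simp_rw [← mul_div_assoc, ← sum_div, ← hcross]
  rw [hexpand, add_div, sub_div, mul_div_assoc] at hmin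
  linarith

theorem lasso_oracle_inequality [DecidableEq ι] {c lam t : ℝ} (S : Finset ι)
    (hS : ∀ j ∉ S, β₀ j = 0) (hlam : 0 ≤ lam)
    (hmin : (∑ i, (Y i - ∑ j, Z i j * β j) ^ 2) / c + lam * ∑ j, |β j|
      ≤ (∑ i, (Y i - ∑ j, Z i j * β₀ j) ^ 2) / c + lam * ∑ j, |β₀ j|)
    (hnoise : ∀ j, |(∑ i, Z i j * (Y i - ∑ j', Z i j' * β₀ j')) / c| ≤ t) :
    (∑ i, (∑ j, Z i j * (β j - β₀ j)) ^ 2) / c + (lam - 2 * t) * ∑ j ∈ Sᶜ, |β j - β₀ j|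
      ≤ (lam + 2 * t) * ∑ j ∈ S, |β j - β₀ j| := by
  have hbasic := lasso_basic_inequality Z Y β₀ β hmin
  have hnoise' := (le_abs_self _).trans
    (abs_sum_mul_le_of_abs_le univ (fun j => β j - β₀ j) _ fun j _ => hnoise j)
  have hl1 := mul_le_mul_of_nonneg_left (sum_abs_sub_sum_abs_le_of_eq_zero β₀ β S hS) hlam
  rw [← sum_add_sum_compl S (fun j => |β j - β₀ j|)] at hnoise'
  linarith

theorem lasso_cone_and_sq_le [DecidableEq ι] {c γ t : ℝ} (S : Finset ι) (hS : ∀ j ∉ S, β₀ j = 0)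
    (hc : 0 ≤ c) (ht : 0 < t) (hγ : 4 ≤ γ)
    (hmin : (∑ i, (Y i - ∑ j, Z i j * β j) ^ 2) / c + γ * t * ∑ j, |β j|
      ≤ (∑ i, (Y i - ∑ j, Z i j * β₀ j) ^ 2) / c + γ * t * ∑ j, |β₀ j|)
    (hnoise : ∀ j, |(∑ i, Z i j * (Y i - ∑ j', Z i j' * β₀ j')) / c| ≤ t) :
    ∑ j ∈ Sᶜ, |β j - β₀ j| ≤ 3 * ∑ j ∈ S, |β j - β₀ j|
      ∧ (∑ i, (∑ j, Z i j * (β j - β₀ j)) ^ 2) / c ≤ (γ + 2) * t * ∑ j ∈ S, |β j - β₀ j| := by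
  have horacle := lasso_oracle_inequality Z Y β₀ β S hS (by positivity) hmin hnoise
  have hE : 0 ≤ (∑ i, (∑ j, Z i j * (β j - β₀ j)) ^ 2) / c := by positivity
  have hin : 0 ≤ ∑ j ∈ S, |β j - β₀ j| := by positivity
  have hout : 0 ≤ ∑ j ∈ Sᶜ, |β j - β₀ j| := by positivity
  constructor
  · refine le_of_mul_le_mul_left ?_ (by nlinarith : 0 < (γ - 2) * t)
    nlinarith [mul_nonneg (by linarith : 0 ≤ γ - 4) (mul_nonneg ht.le hin)]
  · nlinarith [mul_nonneg (mul_nonneg (by linarith : 0 ≤ γ - 2) ht.le) hout]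

end Lasso

theorem REcondition.mul_sqrt_sum_sq_le {n' p' : ℕ} {Zd : Matrix (Fin n') (Fin p') ℝ} {s : ℕ}
    {c₀ κ : ℝ} (h : REcondition Zd s c₀ κ) (hn : 1 ≤ n') {J₀ : Finset (Fin p')}
    (hJ : J₀.card ≤ s) (δ : Fin p' → ℝ) (hδ : ∑ j ∈ J₀ᶜ, |δ j| ≤ c₀ * ∑ j ∈ J₀, |δ j|) :
    κ * √(∑ j, δ j ^ 2) ≤ √(∑ i, (∑ j, Zd i j * δ j) ^ 2) / √n' := by
  rcases eq_or_ne δ 0 with rfl | hδ0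
  · simp
  rw [le_div_iff₀ (Real.sqrt_pos.2 (by exact_mod_cast hn))]
  linarith [h.2 J₀ hJ δ hδ0 hδ]

theorem le_div_of_sq_le_mul_of_mul_le {A L c κ : ℝ} (hκ : 0 < κ) (hc : 0 ≤ c)
    (hsq : A ^ 2 ≤ c * L) (hL : κ * L ≤ A) : A ≤ c / κ := by
  rw [le_div_iff₀ hκ]
  by_contra! hlt
  have hA : 0 < A := pos_of_mul_pos_left (hc.trans_lt hlt) hκ.le
  nlinarith [mul_pos hA (sub_pos.2 hlt), mul_le_mul_of_nonneg_left hL hc,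
    mul_le_mul_of_nonneg_right hsq hκ.le]

theorem REcondition.sqrt_sum_sq_le_of_cone {n' p' : ℕ} {Zd : Matrix (Fin n') (Fin p') ℝ}
    {s : ℕ} {c₀ κ M : ℝ} (h : REcondition Zd s c₀ κ) (hn : 1 ≤ n') {J₀ : Finset (Fin p')}
    (hJ : J₀.card ≤ s) (δ : Fin p' → ℝ) (hcone : ∑ j ∈ J₀ᶜ, |δ j| ≤ c₀ * ∑ j ∈ J₀, |δ j|)
    (hM : 0 ≤ M) (hpred : (∑ i, (∑ j, Zd i j * δ j) ^ 2) / n' ≤ M * ∑ j ∈ J₀, |δ j|) :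
    √(∑ i, (∑ j, Zd i j * δ j) ^ 2) / √n' ≤ M * √s / κ
      ∧ √(∑ j, δ j ^ 2) ≤ M * √s / κ ^ 2 := by
  have hκL := h.mul_sqrt_sum_sq_le hn hJ δ hcone
  have hpred' : (√(∑ i, (∑ j, Zd i j * δ j) ^ 2) / √n') ^ 2 ≤ M * √s * √(∑ j, δ j ^ 2) := by
    rw [div_pow, Real.sq_sqrt (by positivity), Real.sq_sqrt (by positivity), mul_assoc]
    exact hpred.trans (mul_le_mul_of_nonneg_left
      (sum_abs_le_sqrt_mul_sqrt_sum_sq J₀ δ (by exact_mod_cast hJ)) hM)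
  have hpred_le := le_div_of_sq_le_mul_of_mul_le h.1 (by positivity) hpred' hκL
  refine ⟨hpred_le, ?_⟩
  rw [sq, ← div_div, le_div_iff₀ h.1, mul_comm]
  exact hκL.trans hpred_le

open scoped Classical in
theorem lasso_deterministic_bounds_general
    {n' p' : ℕ} (hn' : 1 ≤ n')
    (Zd : Matrix (Fin n') (Fin p') ℝ) (Y : Fin n' → ℝ)
    (βstar βhat : Fin p' → ℝ)
    (t γ lam : ℝ) (ht : 0 < t) (hγ : 4 ≤ γ) (hlam : lam = γ * t)
    (s : ℕ) (κ : ℝ)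
    (hS : (Finset.univ.filter (fun j => βstar j ≠ 0)).card ≤ s)
    (hRE : REcondition Zd s 3 κ)
    (hmin : ∀ β : Fin p' → ℝ,
      (∑ i, (Y i - ∑ j, Zd i j * βhat j) ^ 2) / (n' : ℝ) + lam * ∑ j, |βhat j|
        ≤ (∑ i, (Y i - ∑ j, Zd i j * β j) ^ 2) / (n' : ℝ) + lam * ∑ j, |β j|)
    (hmax : ∀ j : Fin p',
      |(∑ i, Zd i j * (Y i - ∑ j', Zd i j' * βstar j')) / (n' : ℝ)| ≤ t) :
    Real.sqrt (∑ i, (∑ j, Zd i j * (βhat j - βstar j)) ^ 2) / Real.sqrt n'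
        ≤ 4 * (γ + 1) * t * Real.sqrt s / κ
    ∧ ∀ q : ℝ, 1 ≤ q → q ≤ 2 →
        (∑ j, |βhat j - βstar j| ^ q) ^ (1 / q)
          ≤ (4 : ℝ) ^ (2 / q) * (γ + 1) * t * (s : ℝ) ^ (1 / q) / κ ^ 2 := by
  subst hlam
  set S := univ.filter (fun j => βstar j ≠ 0)
  obtain ⟨hcone, hpred⟩ := lasso_cone_and_sq_le Zd Y βstar βhat S
    (fun j hj => by simpa [S] using hj) (Nat.cast_nonneg n') ht hγ (hmin βstar) hmax
  obtain ⟨hpred_le, hl2_le⟩ := hRE.sqrt_sum_sq_le_of_cone hn' hS _ hcone (by positivity) hpred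
  have hγ' : (γ + 2) * t * √s ≤ 4 * (γ + 1) * t * √s := by
    nlinarith [mul_nonneg ht.le (Real.sqrt_nonneg s)]
  refine ⟨hpred_le.trans (div_le_div_of_nonneg_right hγ' hRE.1.le), fun q hq1 hq2 => ?_⟩
  have hl1 := sum_abs_le_mul_sqrt_mul_sqrt_sum_sq S _ (r := s) (by norm_num)
    (by exact_mod_cast hS) hcone
  rw [show (1 : ℝ) + 3 = 4 by norm_num] at hl1
  have hl2 : √(∑ j, (βhat j - βstar j) ^ 2) ≤ 4 * √s * ((γ + 1) * t / κ ^ 2) :=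
    hl2_le.trans ((div_le_div_of_nonneg_right hγ' (sq_nonneg κ)).trans_eq (by ring))
  calc (∑ j, |βhat j - βstar j| ^ q) ^ (1 / q)
      ≤ 4 ^ (2 / q) * (s : ℝ) ^ (1 / q) * ((γ + 1) * t / κ ^ 2) :=
        rpow_sum_abs_rpow_le univ _ hq1 hq2 (by norm_num) (by positivity) (by positivity) hl1 hl2
    _ = _ := by ring

open scoped Classical in
/-- **Lemma (deterministic lasso bounds).** If max_j |(1/n')Σᵢ 𝕫'_{i,j}ξᵢ| ≤ t, 𝕫' satisfies
RE(s,3) with constant κ(s,3) > 0, |S| ≤ s and λ = γt with γ ≥ 4, then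
‖𝕫'(β̂−β*)‖_{n'} ≤ 4(γ+1)t√s/κ(s,3) and, for every 1 ≤ q ≤ 2,
|β̂−β*|_q ≤ 4^{2/q}(γ+1)·t·s^{1/q}/κ(s,3)². -/
theorem lasso_deterministic_bounds
    {n' p' : ℕ} (hn' : 1 ≤ n') (hp' : 1 ≤ p')
    (Zd : Matrix (Fin n') (Fin p') ℝ) (Y : Fin n' → ℝ)
    (βstar βhat : Fin p' → ℝ)
    (t γ lam : ℝ) (ht : 0 < t) (hγ : 4 ≤ γ) (hlam : lam = γ * t)
    (s : ℕ) (κ : ℝ)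
    (hS : (Finset.univ.filter (fun j => βstar j ≠ 0)).card ≤ s)
    (hRE : REcondition Zd s 3 κ)
    (hmin : ∀ β : Fin p' → ℝ,
      (∑ i, (Y i - ∑ j, Zd i j * βhat j) ^ 2) / (n' : ℝ) + lam * ∑ j, |βhat j|
        ≤ (∑ i, (Y i - ∑ j, Zd i j * β j) ^ 2) / (n' : ℝ) + lam * ∑ j, |β j|)
    (hmax : ∀ j : Fin p',
      |(∑ i, Zd i j * (Y i - ∑ j', Zd i j' * βstar j')) / (n' : ℝ)| ≤ t) :
    Real.sqrt (∑ i, (∑ j, Zd i j * (βhat j - βstar j)) ^ 2) / Real.sqrt n'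
        ≤ 4 * (γ + 1) * t * Real.sqrt s / κ
    ∧ ∀ q : ℝ, 1 ≤ q → q ≤ 2 →
        (∑ j, |βhat j - βstar j| ^ q) ^ (1 / q)
          ≤ (4 : ℝ) ^ (2 / q) * (γ + 1) * t * (s : ℝ) ^ (1 / q) / κ ^ 2 :=
  lasso_deterministic_bounds_general hn' Zd Y βstar βhat t γ lam ht hγ hlam s κ hS hRE hmin hmax
end
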